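/- Let c_E be the sharp sub-exponential comparison constant, L a standard Laplace random variable, and ℓ_{c_E}(u) = E[(c_E·L − u)₊]. Let J_E be the stop-loss envelope associated to the sub-exponential tail envelope s_E(t) = min{1, 2e^{-t}}, namely J_E(u) = B_E − p_E·u for 0 ≤ u ≤ a_E and J_E(u) = ∫_u^∞ s_E(t) dt for u ≥ a_E. Then ℓ_{c_E}(u) ≥ J_E(u) for all u ≥ 0. -/

import Mathlib

open MeasureTheory Real Set

/-- The standard Laplace law on `ℝ`, with density `(1/2)e^{-|x|}` w.r.t. Lebesgue measure. -/
noncomputable def laplaceMeasure : Measure ℝ :=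
  (volume : Measure ℝ).withDensity fun x => ENNReal.ofReal ((1 / 2) * Real.exp (-|x|))

/-- The sub-exponential tail envelope `s_E(t) = min{1, 2e^{-t}}`. -/
noncomputable def sE (t : ℝ) : ℝ := min 1 (2 * Real.exp (-t))

/-- `A_E = ∫₀^∞ s_E(t) dt`. -/
noncomputable def AE : ℝ := ∫ t in Set.Ioi (0 : ℝ), sE t

/-- `H_E(x) = x s_E(x) + ∫_x^∞ s_E(t) dt`. -/
noncomputable def HE (x : ℝ) : ℝ := x * sE x + ∫ t in Set.Ioi x, sE t


/-!
The envelope is explicit: `s_E = 1` on `[0, log 2]` and `2e^{-t}` beyond, so `A_E = 1 + log 2`,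
`H_E(a_E) = B_E` forces `a_E > log 2` and `p_E (1 + a_E) = B_E`, and `w_E = a_E - 2 log 2`.
For `c > 0` and `u ≥ 0` the Laplace stop-loss is `ℓ_c(u) = (c/2) e^{-u/c}`, which is convex in `u`.
The choice of `c_E` makes the line `B_E − p_E u` the tangent of `ℓ_{c_E}` at `u = c_E w_E`, giving
the bound on `[0, a_E]`. Beyond `a_E`, `ℓ_{c_E}` decays like `e^{-u/c_E}` with `c_E ≥ 1`, hence
no faster than the tail `2e^{-u}`, and it starts above it at `a_E` since `ℓ_{c_E}(a_E) ≥ B_E − p_E a_E = p_E`.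
-/

lemma sE_of_le_log_two {t : ℝ} (h : t ≤ log 2) : sE t = 1 :=
  min_eq_left <| calc
    (1 : ℝ) = 2 * exp (-log 2) := by rw [exp_neg, exp_log two_pos]; norm_num
    _ ≤ 2 * exp (-t) := by gcongr

lemma sE_of_log_two_le {t : ℝ} (h : log 2 ≤ t) : sE t = 2 * exp (-t) :=
  min_eq_right <| calc
    2 * exp (-t) ≤ 2 * exp (-log 2) := by gcongr
    _ = 1 := by rw [exp_neg, exp_log two_pos]; norm_num

lemma integrableOn_sE_Ioi (x : ℝ) : IntegrableOn sE (Ioi x) := by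
  refine Integrable.mono' (g := fun t => 2 * exp (-t)) ?_ ?_ (ae_of_all _ fun t => ?_)
  · simpa using (exp_neg_integrableOn_Ioi x one_pos).const_mul 2
  · exact (continuous_const.min (continuous_const.mul continuous_neg.rexp)).aestronglyMeasurable
  · have h0 : 0 ≤ sE t := le_min zero_le_one (by positivity)
    rw [norm_of_nonneg h0]
    exact min_le_right _ _

lemma integral_Ioi_sE_of_log_two_le {x : ℝ} (h : log 2 ≤ x) :
    ∫ t in Ioi x, sE t = 2 * exp (-x) := by
  rw [setIntegral_congr_fun measurableSet_Ioi fun t ht => sE_of_log_two_le (h.trans (le_of_lt ht)),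
    integral_const_mul, integral_exp_neg_Ioi]

lemma integral_Ioi_sE_of_le_log_two {x : ℝ} (h : x ≤ log 2) :
    ∫ t in Ioi x, sE t = log 2 - x + 1 := by
  rw [← Ioc_union_Ioi_eq_Ioi h, setIntegral_union (Ioc_disjoint_Ioi le_rfl) measurableSet_Ioi
      ((integrableOn_sE_Ioi x).mono_set Ioc_subset_Ioi_self)
      ((integrableOn_sE_Ioi x).mono_set (Ioi_subset_Ioi h)),
    integral_Ioi_sE_of_log_two_le le_rfl, exp_neg, exp_log two_pos,
    setIntegral_congr_fun measurableSet_Ioc fun t ht => sE_of_le_log_two ht.2,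
    setIntegral_const, volume_real_Ioc_of_le h, smul_eq_mul, mul_one]
  norm_num

lemma AE_eq : AE = log 2 + 1 := by
  rw [AE, integral_Ioi_sE_of_le_log_two (log_nonneg one_le_two), sub_zero]

lemma HE_of_le_log_two {x : ℝ} (h : x ≤ log 2) : HE x = AE := by
  rw [HE, sE_of_le_log_two h, integral_Ioi_sE_of_le_log_two h, AE_eq]; ring

lemma HE_of_log_two_le {x : ℝ} (h : log 2 ≤ x) : HE x = 2 * exp (-x) * (1 + x) := by
  rw [HE, sE_of_log_two_le h, integral_Ioi_sE_of_log_two_le h]; ring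

lemma log_two_lt_of_HE_eq_half {a : ℝ} (h : HE a = AE / 2) : log 2 < a := by
  by_contra! ha
  rw [HE_of_le_log_two ha, AE_eq] at h
  linarith [log_nonneg one_le_two]

lemma integral_laplaceMeasure (g : ℝ → ℝ) :
    ∫ x, g x ∂laplaceMeasure = ∫ x, 1 / 2 * exp (-|x|) * g x := by
  rw [laplaceMeasure, integral_withDensity_eq_integral_toReal_smul
    (by fun_prop : Measurable fun x : ℝ => ENNReal.ofReal (1 / 2 * exp (-|x|)))
    (ae_of_all _ fun _ => ENNReal.ofReal_lt_top)]
  simp_rw [ENNReal.toReal_ofReal (by positivity : (0 : ℝ) ≤ 1 / 2 * exp (-|_|)), smul_eq_mul]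

lemma integral_Ioi_sub_mul_exp_neg (v : ℝ) :
    ∫ x in Ioi v, (x - v) * exp (-x) = exp (-v) := by
  have hderiv (x : ℝ) (_ : x ∈ Ici v) :
      HasDerivAt (fun x => -((x - v + 1) * exp (-x))) ((x - v) * exp (-x)) x := by
    have := (((hasDerivAt_id x).sub_const v).add_const 1).mul (hasDerivAt_neg x).exp
    exact this.neg.congr_deriv (by simp only [id]; ring)
  have hlim : Filter.Tendsto (fun x => -((x - v + 1) * exp (-x))) Filter.atTop (nhds 0) := by
    have h1 : Filter.Tendsto (fun x => x * exp (-x)) Filter.atTop (nhds 0) := by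
      simpa using tendsto_pow_mul_exp_neg_atTop_nhds_zero 1
    convert (h1.add (tendsto_exp_neg_atTop_nhds_zero.const_mul (1 - v))).neg using 2 <;> simp; ring
  rw [integral_Ioi_of_hasDerivAt_of_nonneg' hderiv
    (fun x hx => mul_nonneg (sub_nonneg.2 (le_of_lt hx)) (exp_nonneg _)) hlim]
  ring

lemma integral_laplaceMeasure_max_sub {c u : ℝ} (hc : 0 < c) (hu : 0 ≤ u) :
    ∫ x, max (c * x - u) 0 ∂laplaceMeasure = c / 2 * exp (-(u / c)) := by
  have hv : 0 ≤ u / c := div_nonneg hu hc.le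
  rw [integral_laplaceMeasure, ← setIntegral_eq_integral_of_forall_compl_eq_zero
    (s := Ioi (u / c)) fun x hx => ?_]
  · calc ∫ x in Ioi (u / c), 1 / 2 * exp (-|x|) * max (c * x - u) 0
        = ∫ x in Ioi (u / c), c / 2 * ((x - u / c) * exp (-x)) := by
          refine setIntegral_congr_fun measurableSet_Ioi fun x hx => ?_
          have hcx : 0 ≤ c * x - u := by
            have := (div_lt_iff₀' hc).1 (mem_Ioi.1 hx); linarith
          rw [abs_of_nonneg (hv.trans (le_of_lt hx)), max_eq_left hcx]
          field_simp
      _ = c / 2 * exp (-(u / c)) := by rw [integral_const_mul, integral_Ioi_sub_mul_exp_neg]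
  · have : c * x - u ≤ 0 := by
      rw [sub_nonpos, ← le_div_iff₀' hc]; exact not_lt.1 hx
    simp [max_eq_right this]

lemma exp_neg_mul_one_add_sub_le_exp_neg (w x : ℝ) : exp (-w) * (1 + (w - x)) ≤ exp (-x) :=
  calc exp (-w) * (1 + (w - x)) ≤ exp (-w) * exp (w - x) := by
        gcongr; linarith [add_one_le_exp (w - x)]
    _ = exp (-x) := by rw [← exp_add]; ring_nf

lemma mul_one_add_sub_mul_le_half_mul_exp_neg_div {c p w : ℝ} (hc : 0 < c)
    (hw : exp (-w) = 2 * p) (u : ℝ) : c * (p * (1 + w)) - p * u ≤ c / 2 * exp (-(u / c)) :=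
  calc c * (p * (1 + w)) - p * u = c / 2 * (exp (-w) * (1 + (w - u / c))) := by
        rw [hw]; field_simp; ring
    _ ≤ c / 2 * exp (-(u / c)) := by gcongr; exact exp_neg_mul_one_add_sub_le_exp_neg _ _

lemma mul_exp_neg_sub_le_half_mul_exp_neg_div {a c q u : ℝ} (hc : 1 ≤ c) (hau : a ≤ u)
    (hq : 0 ≤ q) (hqa : q ≤ c / 2 * exp (-(a / c))) :
    q * exp (-(u - a)) ≤ c / 2 * exp (-(u / c)) :=
  calc q * exp (-(u - a)) ≤ q * exp (-((u - a) / c)) := by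
        gcongr; exact div_le_self (sub_nonneg.2 hau) hc
    _ ≤ c / 2 * exp (-(a / c)) * exp (-((u - a) / c)) := by gcongr
    _ = c / 2 * exp (-(u / c)) := by
        rw [mul_assoc, ← exp_add]; congr 2; field_simp; ring

theorem stmt16_general
    (aE pE wE cE : ℝ)
    (hHaE : HE aE = AE / 2)
    (hpE : pE = 2 * Real.exp (-aE))
    (hwE : wE = Real.log (1 / (2 * pE)))
    (hcE : cE = (AE / 2) / (pE * (1 + wE))) :
    ∀ u : ℝ, 0 ≤ u →
      (if u ≤ aE then AE / 2 - pE * u else ∫ t in Set.Ioi u, sE t) ≤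
        ∫ x, max (cE * x - u) 0 ∂laplaceMeasure := by
  have ha : log 2 < aE := log_two_lt_of_HE_eq_half hHaE
  have hp : 0 < pE := hpE ▸ by positivity
  have hB : AE / 2 = pE * (1 + aE) := by rw [← hHaE, HE_of_log_two_le ha.le, hpE]
  have hexp_w : exp (-wE) = 2 * pE := by
    rw [hwE, one_div, log_inv, neg_neg, exp_log (by positivity)]
  have hw : wE = aE - 2 * log 2 := by
    rw [hwE, hpE, one_div, log_inv, log_mul two_ne_zero (by positivity),
      log_mul two_ne_zero (exp_ne_zero _), log_exp]
    ring
  have hw1 : 0 < 1 + wE := by linarith [log_two_lt_d9]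
  have hc : cE = (1 + aE) / (1 + wE) := by rw [hcE, hB]; field_simp
  have hc1 : 1 ≤ cE := by rw [hc, one_le_div hw1]; linarith [log_pos one_lt_two]
  have hcB : cE * (pE * (1 + wE)) = AE / 2 := by rw [hcE, div_mul_cancel₀ _ (by positivity)]
  have hline (u : ℝ) : AE / 2 - pE * u ≤ cE / 2 * exp (-(u / cE)) :=
    hcB ▸ mul_one_add_sub_mul_le_half_mul_exp_neg_div (by linarith) hexp_w u
  intro u hu
  rw [integral_laplaceMeasure_max_sub (by linarith) hu]
  split_ifs with hua
  · exact hline u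
  · calc ∫ t in Ioi u, sE t = pE * exp (-(u - aE)) := by
          rw [integral_Ioi_sE_of_log_two_le (by linarith), hpE, mul_assoc, ← exp_add]; ring_nf
      _ ≤ cE / 2 * exp (-(u / cE)) := mul_exp_neg_sub_le_half_mul_exp_neg_div hc1
          (not_le.1 hua).le hp.le (by linarith [hline aE])

/-- Laplace stop-loss dominates the envelope: with `c_E` the sharp sub-exponential
comparison constant, `L` standard Laplace, `ℓ_{c_E}(u) = E[(c_E L − u)₊]`, and `J_E` the
stop-loss envelope for `s_E(t) = min{1, 2e^{-t}}` (`J_E(u) = B_E − p_E u` on `[0, a_E]`,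
`J_E(u) = ∫_u^∞ s_E` for `u ≥ a_E`), one has `ℓ_{c_E}(u) ≥ J_E(u)` for all `u ≥ 0`. -/
theorem stmt16
    (aE pE wE cE : ℝ)
    (haE : 0 < aE) (hHaE : HE aE = AE / 2)
    (hpE : pE = 2 * Real.exp (-aE))
    (hwE : wE = Real.log (1 / (2 * pE)))
    (hcE : cE = (AE / 2) / (pE * (1 + wE))) :
    ∀ u : ℝ, 0 ≤ u →
      (if u ≤ aE then AE / 2 - pE * u else ∫ t in Set.Ioi u, sE t) ≤
        ∫ x, max (cE * x - u) 0 ∂laplaceMeasure :=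
  stmt16_general aE pE wE cE hHaE hpE hwE hcE
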